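/- Let T > 0, η, λ, σ > 0 and x₀ > 0. Let (Ω, F, P) be a probability space carrying a standard Brownian motion W : [0,T] × Ω → ℝ with continuous sample paths. For each N ∈ ℕ (N ≥ 1) define the Euler approximation Y^N_0 := x₀ and Y^N_{k+1} := Y^N_k + (T/N)·((η + σ²/2)·Y^N_k − λ·(Y^N_k)²) + σ·Y^N_k·(W_{(k+1)T/N} − W_{kT/N}) for k = 0, 1, …, N−1. Then lim_{N → ∞} E[|Y^N_N|^p] = ∞ for every p ∈ [1, ∞). -/

import Mathlib

/-!
On the event that the first Brownian increment is at least `r ≍ N` while all later increments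
lie in `[-1, 1]`, the first Euler step makes `Y` of order `N`, after which the quadratic drift
term `-(T/N) λ Y²` dominates every subsequent step: `(T λ / 2N) |Y|` at least squares in each
step, so `|Y^N_N| ≥ M^(2^(N-1))` for a constant `M > 1`. By independence of the increments this
event has probability at least `exp(-O(N³))`, which the doubly exponential growth outweighs.
-/

open MeasureTheory ProbabilityTheory Filter

/-- `W` is a standard Brownian motion on the time interval `[0, T]` with
continuous sample paths: each `W t` is measurable, `W 0 = 0`, the sample paths
are continuous on `[0, T]`, the increment `W t - W s` is centered Gaussian with
variance `t - s` for `0 ≤ s ≤ t ≤ T`, and increments over disjoint consecutive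
time intervals are independent. -/
def IsStandardBrownianMotion {Ω : Type*} [MeasurableSpace Ω] (P : Measure Ω)
    (T : ℝ) (W : ℝ → Ω → ℝ) : Prop :=
  (∀ t, t ∈ Set.Icc 0 T → Measurable (W t)) ∧
  (∀ ω, W 0 ω = 0) ∧
  (∀ ω, ContinuousOn (fun t => W t ω) (Set.Icc 0 T)) ∧
  (∀ s t : ℝ, 0 ≤ s → s ≤ t → t ≤ T →
    Measure.map (fun ω => W t ω - W s ω) P = gaussianReal 0 (Real.toNNReal (t - s))) ∧
  (∀ (n : ℕ) (t : Fin (n + 1) → ℝ), Monotone t → (∀ i, t i ∈ Set.Icc 0 T) →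
    iIndepFun
      (fun (i : Fin n) => fun ω => W (t i.succ) ω - W (t i.castSucc) ω) P)

open scoped NNReal

lemma ofReal_mul_le_gaussianReal_Icc {μ : ℝ} {v : ℝ≥0} (hv : v ≠ 0) {a b c : ℝ} (hc : 0 ≤ c)
    (hpdf : ∀ x ∈ Set.Icc a b, c ≤ gaussianPDFReal μ v x) :
    ENNReal.ofReal (c * (b - a)) ≤ gaussianReal μ v (Set.Icc a b) := by
  rw [gaussianReal_apply μ hv, ENNReal.ofReal_mul hc, ← Real.volume_Icc, ← setLIntegral_const]
  exact setLIntegral_mono (measurable_gaussianPDF μ v) fun x hx =>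
    ENNReal.ofReal_le_ofReal (hpdf x hx)

lemma ofReal_le_gaussianReal_Ici {v : ℝ≥0} (hv : v ≠ 0) {r : ℝ} (hr : 0 ≤ r) :
    ENNReal.ofReal ((√(2 * Real.pi * v))⁻¹ * Real.exp (-(r + 1) ^ 2 / (2 * v)))
      ≤ gaussianReal 0 v (Set.Ici r) := by
  calc _ = ENNReal.ofReal
        ((√(2 * Real.pi * v))⁻¹ * Real.exp (-(r + 1) ^ 2 / (2 * v)) * (r + 1 - r)) := by
          ring_nf
    _ ≤ gaussianReal 0 v (Set.Icc r (r + 1)) := by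
        refine ofReal_mul_le_gaussianReal_Icc hv (by positivity) fun x hx => ?_
        rw [gaussianPDFReal, sub_zero]
        gcongr <;> nlinarith [hx.1, hx.2]
    _ ≤ _ := measure_mono Set.Icc_subset_Ici_self

lemma ofReal_le_gaussianReal_Icc_neg_one_one {v : ℝ≥0} (hv : v ≠ 0) (hv1 : (v : ℝ) ≤ 1) :
    ENNReal.ofReal (Real.exp (-2⁻¹) / √(2 * Real.pi)) ≤ gaussianReal 0 v (Set.Icc (-1) 1) := by
  have hv0 : (0 : ℝ) < v := by positivity
  calc _ = ENNReal.ofReal ((√(2 * Real.pi * v))⁻¹ * Real.exp (-2⁻¹) * (√v - 0)) := by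
          congr 1
          rw [sub_zero, Real.sqrt_mul (by positivity) (v : ℝ)]
          field_simp
    _ ≤ gaussianReal 0 v (Set.Icc 0 √v) := by
        refine ofReal_mul_le_gaussianReal_Icc hv (by positivity) fun x hx => ?_
        rw [gaussianPDFReal, sub_zero]
        gcongr
        rw [neg_div, neg_le_neg_iff, div_le_iff₀ (by positivity)]
        nlinarith [hx.1, hx.2, Real.sq_sqrt hv0.le]
    _ ≤ _ := measure_mono (Set.Icc_subset_Icc (by norm_num) (Real.sqrt_le_one.mpr hv1))

noncomputable def gridIncrement {Ω : Type*} (W : ℝ → Ω → ℝ) (T : ℝ) (N k : ℕ) (ω : Ω) : ℝ :=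
  W (((k : ℝ) + 1) * T / N) ω - W ((k : ℝ) * T / N) ω

lemma natCast_mul_div_mem_Icc {T : ℝ} (hT : 0 ≤ T) {N k : ℕ} (hk : k ≤ N) :
    (k : ℝ) * T / N ∈ Set.Icc 0 T :=
  ⟨by positivity, div_le_of_le_mul₀ (by positivity) hT (by rw [mul_comm]; gcongr)⟩

def eulerBlowupEvent {Ω : Type*} (W : ℝ → Ω → ℝ) (T : ℝ) (n : ℕ) (r : ℝ) : Set Ω :=
  {ω | r ≤ gridIncrement W T (n + 1) 0 ω ∧
    ∀ k, 1 ≤ k → k ≤ n → |gridIncrement W T (n + 1) k ω| ≤ 1}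

namespace IsStandardBrownianMotion

variable {Ω : Type*} [MeasurableSpace Ω] {P : Measure Ω} {T : ℝ} {W : ℝ → Ω → ℝ}

lemma iIndepFun_gridIncrement (hW : IsStandardBrownianMotion P T W) (hT : 0 ≤ T) (N : ℕ) :
    iIndepFun (fun i : Fin N => gridIncrement W T N i) P := by
  have hmono : Monotone fun i : Fin (N + 1) => (i : ℝ) * T / N := fun i j hij => by
    simp only [mul_div_assoc]
    gcongr
    exact_mod_cast hij
  convert hW.2.2.2.2 N _ hmono fun i => natCast_mul_div_mem_Icc hT (Nat.lt_succ_iff.mp i.is_lt)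
    using 1
  ext i ω
  simp [gridIncrement]

lemma measurable_gridIncrement (hW : IsStandardBrownianMotion P T W) (hT : 0 ≤ T) {N k : ℕ}
    (hk : k < N) : Measurable (gridIncrement W T N k) :=
  (hW.1 _ (by exact_mod_cast natCast_mul_div_mem_Icc hT hk)).sub
    (hW.1 _ (natCast_mul_div_mem_Icc hT hk.le))

lemma map_gridIncrement (hW : IsStandardBrownianMotion P T W) (hT : 0 ≤ T) {N k : ℕ}
    (hk : k < N) : P.map (gridIncrement W T N k) = gaussianReal 0 (T / N).toNNReal := by
  have hk' : ((k + 1 : ℕ) : ℝ) * T / N ∈ Set.Icc 0 T := natCast_mul_div_mem_Icc hT hk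
  push_cast at hk'
  have hmap := hW.2.2.2.1 _ _ (natCast_mul_div_mem_Icc hT hk.le).1
    (by simp only [mul_div_assoc]; gcongr; linarith) hk'.2
  rwa [show ((k : ℝ) + 1) * T / N - k * T / N = T / N by ring] at hmap

lemma measure_iInter_gridIncrement_preimage (hW : IsStandardBrownianMotion P T W) (hT : 0 ≤ T)
    {N : ℕ} {S : Fin N → Set ℝ} (hS : ∀ i, MeasurableSet (S i)) :
    P (⋂ i : Fin N, gridIncrement W T N i ⁻¹' S i) =
      ∏ i, gaussianReal 0 (T / N).toNNReal (S i) := by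
  rw [(hW.iIndepFun_gridIncrement hT N).meas_iInter fun i => ⟨S i, hS i, rfl⟩]
  refine Finset.prod_congr rfl fun i _ => ?_
  rw [← hW.map_gridIncrement hT i.is_lt,
    Measure.map_apply (hW.measurable_gridIncrement hT i.is_lt) (hS i)]

lemma measurableSet_eulerBlowupEvent (hW : IsStandardBrownianMotion P T W) (hT : 0 ≤ T)
    (n : ℕ) (r : ℝ) : MeasurableSet (eulerBlowupEvent W T n r) := by
  simp only [eulerBlowupEvent, Set.ofPred_and, Set.ofPred_forall]
  exact (measurableSet_le measurable_const (hW.measurable_gridIncrement hT (by omega))).inter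
    (.iInter fun k => .iInter fun _ => .iInter fun hkn =>
      measurableSet_le (hW.measurable_gridIncrement hT (by omega)).abs measurable_const)

lemma ofReal_le_measure_eulerBlowupEvent (hW : IsStandardBrownianMotion P T W) (hT : 0 < T)
    {n : ℕ} (hTn : T ≤ n + 1) {r : ℝ} (hr : 0 ≤ r) :
    ENNReal.ofReal ((√(2 * Real.pi * T))⁻¹ * Real.exp (-(r + 1) ^ 2 * (n + 1) / (2 * T)))
        * ENNReal.ofReal (Real.exp (-2⁻¹) / √(2 * Real.pi)) ^ n
      ≤ P (eulerBlowupEvent W T n r) := by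
  set v : ℝ≥0 := (T / (n + 1 : ℕ)).toNNReal with hv_def
  have hv : (v : ℝ) = T / (n + 1) := by
    rw [hv_def, Real.coe_toNNReal _ (by positivity)]; push_cast; rfl
  have hv0 : v ≠ 0 := by
    rw [← NNReal.coe_ne_zero, hv]; positivity
  set S : Fin (n + 1) → Set ℝ := Fin.cons (Set.Ici r) fun _ => Set.Icc (-1) 1
  have hS : ∀ i, MeasurableSet (S i) := Fin.cases measurableSet_Ici fun _ => measurableSet_Icc
  have hsub : ⋂ i : Fin (n + 1), gridIncrement W T (n + 1) i ⁻¹' S i ⊆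
      eulerBlowupEvent W T n r := by
    intro ω hω
    simp only [Set.mem_iInter, Set.mem_preimage] at hω
    refine ⟨hω 0, fun k hk1 hkn => abs_le.mpr ?_⟩
    obtain ⟨j, rfl⟩ := Nat.exists_eq_add_of_le' hk1
    simpa [S] using hω (Fin.succ ⟨j, by omega⟩)
  have htail : ENNReal.ofReal ((√(2 * Real.pi * T))⁻¹ * Real.exp (-(r + 1) ^ 2 * (n + 1) / (2 * T)))
      ≤ gaussianReal 0 v (Set.Ici r) := by
    refine le_trans (ENNReal.ofReal_le_ofReal ?_) (ofReal_le_gaussianReal_Ici hv0 hr)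
    rw [hv]
    gcongr ?_ * Real.exp ?_
    · exact inv_anti₀ (by positivity)
        (Real.sqrt_le_sqrt (by gcongr; exact div_le_self hT.le (by linarith)))
    · field_simp
      rfl
  calc _ ≤ gaussianReal 0 v (Set.Ici r) * gaussianReal 0 v (Set.Icc (-1) 1) ^ n := by
        gcongr
        exact ofReal_le_gaussianReal_Icc_neg_one_one hv0
          (by rw [hv, div_le_one (by positivity)]; exact hTn)
    _ = ∏ i, gaussianReal 0 v (S i) := by simp [Fin.prod_univ_succ, S]
    _ = P (⋂ i : Fin (n + 1), gridIncrement W T (n + 1) i ⁻¹' S i) :=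
        (hW.measure_iInter_gridIncrement_preimage hT.le hS).symm
    _ ≤ _ := measure_mono hsub

end IsStandardBrownianMotion

lemma pow_two_pow_le_of_sq_le {u : ℕ → ℝ} {n : ℕ} (hu0 : 1 ≤ u 0)
    (hu : ∀ k < n, u 0 ≤ u k → u k ^ 2 ≤ u (k + 1)) : u 0 ^ 2 ^ n ≤ u n := by
  induction n with
  | zero => simp
  | succ n ih =>
    have hn := ih fun k hk => hu k (by omega)
    have hle : u 0 ≤ u n := (le_self_pow₀ hu0 (by positivity)).trans hn
    calc u 0 ^ 2 ^ (n + 1) = (u 0 ^ 2 ^ n) ^ 2 := by rw [pow_succ, pow_mul]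
      _ ≤ u n ^ 2 := by gcongr
      _ ≤ u (n + 1) := hu n (by omega) hle

lemma sq_le_abs_euler_step {h c lam σ d y : ℝ} (hh : 0 ≤ h) (hc : 0 ≤ c) (hσ : 0 ≤ σ)
    (hd : |d| ≤ 1) (hy : 1 + h * c + σ ≤ h * lam / 2 * |y|) :
    (h * lam / 2 * |y|) ^ 2 ≤ h * lam / 2 * |y + h * (c * y - lam * y ^ 2) + σ * y * d| := by
  set D := 1 + h * c + σ
  have hD : 1 ≤ D := by have := mul_nonneg hh hc; linarith
  have ha : 0 ≤ h * lam := by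
    by_contra! ha
    nlinarith [abs_nonneg y]
  have hmul : |1 + h * c + σ * d| ≤ D := by
    have := abs_le.mp hd
    rw [abs_le]; constructor <;> nlinarith [mul_nonneg hh hc]
  -- the step is `y (1 + h c + σ d) - h lam y²`, and the first factor is at most `D` in size
  have hstep : h * lam * y ^ 2 - D * |y| ≤ |y + h * (c * y - lam * y ^ 2) + σ * y * d| := by
    have htri := abs_sub_abs_le_abs_sub (h * lam * y ^ 2) (y * (1 + h * c + σ * d))
    rw [abs_of_nonneg (by positivity), abs_sub_comm, abs_mul] at htri
    have := mul_le_mul_of_nonneg_left hmul (abs_nonneg y)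
    calc _ ≤ h * lam * y ^ 2 - |y| * |1 + h * c + σ * d| := by linarith
      _ ≤ _ := htri.trans_eq (by ring_nf)
  calc (h * lam / 2 * |y|) ^ 2
      ≤ 2 * (h * lam / 2 * |y|) ^ 2 - D * (h * lam / 2 * |y|) := by nlinarith
    _ = h * lam / 2 * (h * lam * y ^ 2 - D * |y|) := by rw [mul_pow, sq_abs]; ring
    _ ≤ _ := by gcongr

lemma pow_two_pow_le_abs_euler {h c lam σ x₀ r M : ℝ} (hh : 0 ≤ h) (hc : 0 ≤ c) (hlam : 0 ≤ lam)
    (hσ : 0 ≤ σ) (hx₀ : 0 ≤ x₀) (hhlam : h * lam ≤ 2) (hr : 2 * h * lam * x₀ ≤ σ * r)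
    (hDM : 1 + h * c + σ ≤ M) (hM : M ≤ h * lam * σ * x₀ * r / 4)
    {y d : ℕ → ℝ} {n : ℕ} (hy0 : y 0 = x₀)
    (hy : ∀ k ≤ n, y (k + 1) = y k + h * (c * y k - lam * y k ^ 2) + σ * y k * d k)
    (hd0 : r ≤ d 0) (hd : ∀ k, 1 ≤ k → k ≤ n → |d k| ≤ 1) :
    M ^ 2 ^ n ≤ |y (n + 1)| := by
  have ha : 0 ≤ h * lam := mul_nonneg hh hlam
  have hy1 : σ * x₀ * r / 2 ≤ y 1 := by
    rw [hy 0 (Nat.zero_le n), hy0]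
    have := mul_le_mul_of_nonneg_left hd0 (mul_nonneg hσ hx₀)
    nlinarith [mul_nonneg hh hc, mul_nonneg (mul_nonneg hh hc) hx₀]
  set u : ℕ → ℝ := fun k => h * lam / 2 * |y (k + 1)|
  have hMu : M ≤ u 0 := by
    calc M ≤ h * lam / 2 * (σ * x₀ * r / 2) := by linarith
      _ ≤ u 0 := mul_le_mul_of_nonneg_left (hy1.trans (le_abs_self _)) (by linarith)
  have hM1 : 1 ≤ M := by nlinarith [mul_nonneg hh hc]
  have hgrowth := pow_two_pow_le_of_sq_le (u := u) (n := n) (hM1.trans hMu) fun k hk hk0 => by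
    simp only [u]
    rw [hy (k + 1) hk]
    exact sq_le_abs_euler_step hh hc hσ (hd (k + 1) (by omega) hk) (hDM.trans (hMu.trans hk0))
  calc M ^ 2 ^ n ≤ u 0 ^ 2 ^ n := by gcongr
    _ ≤ u n := hgrowth
    _ ≤ |y (n + 1)| := mul_le_of_le_one_left (abs_nonneg _) (by linarith)

lemma ofReal_le_lintegral_rpow_abs_euler {Ω : Type*} [MeasurableSpace Ω] {P : Measure Ω} {T : ℝ}
    {W : ℝ → Ω → ℝ} (hW : IsStandardBrownianMotion P T W) (hT : 0 < T) {c lam σ x₀ K M : ℝ}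
    (hc : 0 ≤ c) (hlam : 0 ≤ lam) (hσ : 0 ≤ σ) (hx₀ : 0 ≤ x₀) (hDM : 1 + T * c + σ ≤ M)
    (hK₁ : 2 * T * lam * x₀ ≤ σ * K) (hK₂ : 4 * M ≤ T * lam * σ * x₀ * K)
    {n : ℕ} (hTn : T ≤ n + 1) (hTlam : T * lam ≤ 2 * (n + 1)) {y : ℕ → Ω → ℝ}
    (hy0 : ∀ ω, y 0 ω = x₀)
    (hy : ∀ k < n + 1, ∀ ω, y (k + 1) ω = y k ω + T / (n + 1 : ℕ) * (c * y k ω - lam * y k ω ^ 2)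
      + σ * y k ω * gridIncrement W T (n + 1) k ω)
    {p : ℝ} (hp : 1 ≤ p) :
    ENNReal.ofReal (M ^ 2 ^ n * ((√(2 * Real.pi * T))⁻¹
        * Real.exp (-(K * (n + 1) + 1) ^ 2 * (n + 1) / (2 * T))
        * (Real.exp (-2⁻¹) / √(2 * Real.pi)) ^ n))
      ≤ ∫⁻ ω, ENNReal.ofReal (|y (n + 1) ω| ^ p) ∂P := by
  set A := eulerBlowupEvent W T n (K * (n + 1))
  have hM1 : 1 ≤ M := by nlinarith [mul_nonneg hT.le hc]
  have hK : 0 ≤ K := by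
    by_contra! hK
    nlinarith [mul_nonneg (mul_nonneg (mul_nonneg hT.le hlam) hσ) hx₀]
  set h : ℝ := T / (n + 1 : ℕ) with h_def
  have hh : h ≤ T := div_le_self hT.le (by simp)
  have hhlam : h * lam ≤ 2 := by
    rw [h_def, div_mul_eq_mul_div, div_le_iff₀ (by positivity)]
    push_cast
    linarith
  have hr : 2 * h * lam * x₀ ≤ σ * (K * (n + 1)) :=
    calc 2 * h * lam * x₀ ≤ 2 * T * lam * x₀ := by gcongr
      _ ≤ σ * K := hK₁
      _ ≤ σ * (K * (n + 1)) := by gcongr; nlinarith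
  have hDM' : 1 + h * c + σ ≤ M := by nlinarith [mul_le_mul_of_nonneg_right hh hc]
  have hM : M ≤ h * lam * σ * x₀ * (K * (n + 1)) / 4 := by
    rw [h_def]
    push_cast
    field_simp
    linarith
  have hpath : ∀ ω ∈ A, M ^ 2 ^ n ≤ |y (n + 1) ω| ^ p := by
    rintro ω ⟨hd0, hd⟩
    have hgrowth := pow_two_pow_le_abs_euler (y := fun k => y k ω) (by positivity) hc hlam hσ hx₀
      hhlam hr hDM' hM (hy0 ω) (fun k hk => hy k (Nat.lt_succ_of_le hk) ω) hd0 hd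
    exact hgrowth.trans (Real.self_le_rpow_of_one_le ((one_le_pow₀ hM1).trans hgrowth) hp)
  calc _ = ENNReal.ofReal (M ^ 2 ^ n) * (ENNReal.ofReal ((√(2 * Real.pi * T))⁻¹
        * Real.exp (-(K * (n + 1) + 1) ^ 2 * (n + 1) / (2 * T)))
        * ENNReal.ofReal (Real.exp (-2⁻¹) / √(2 * Real.pi)) ^ n) := by
        rw [ENNReal.ofReal_mul (by positivity), ENNReal.ofReal_mul (by positivity),
          ENNReal.ofReal_pow (by positivity : 0 ≤ Real.exp (-2⁻¹) / √(2 * Real.pi))]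
    _ ≤ ENNReal.ofReal (M ^ 2 ^ n) * P A := by
        gcongr
        exact hW.ofReal_le_measure_eulerBlowupEvent hT hTn (by positivity)
    _ = ∫⁻ ω, A.indicator (fun _ => ENNReal.ofReal (M ^ 2 ^ n)) ω ∂P :=
        (lintegral_indicator_const (hW.measurableSet_eulerBlowupEvent hT.le n _) _).symm
    _ ≤ _ := lintegral_mono fun ω => Set.indicator_le
        (fun ω hω => ENNReal.ofReal_le_ofReal (hpath ω hω)) ω

open Asymptotics in
lemma tendsto_mul_two_pow_sub_mul_cube {a : ℝ} (ha : 0 < a) (β : ℝ) :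
    Tendsto (fun n : ℕ => a * 2 ^ n - β * ((n : ℝ) + 1) ^ 3) atTop atTop := by
  have hcube : (fun n : ℕ => β * ((n : ℝ) + 1) ^ 3) =o[atTop] fun n => a * 2 ^ n := by
    have h := (isLittleO_pow_const_const_pow_of_one_lt (R := ℝ) 3 one_lt_two).comp_tendsto
      (tendsto_add_atTop_nat 1)
    refine (h.const_mul_left β).trans_isBigO
      (IsBigO.of_bound (2 / a) (.of_forall fun n => le_of_eq ?_)) |>.congr_left fun n => ?_
    · simp [pow_succ, abs_of_pos ha]
      field_simp
    · simp
  exact (IsEquivalent.refl.sub_isLittleO hcube).symm.tendsto_atTop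
    ((tendsto_pow_atTop_atTop_of_one_lt one_lt_two).const_mul_atTop ha)

lemma tendsto_pow_two_pow_mul_exp_neg_cubic_mul_pow {M C b K α : ℝ} (hM : 1 < M) (hC : 0 < C)
    (hb : 0 < b) (hK : 0 ≤ K) (hα : 0 < α) :
    Tendsto (fun n : ℕ => M ^ 2 ^ n * (C * Real.exp (-(K * (n + 1) + 1) ^ 2 * (n + 1) / α) * b ^ n))
      atTop atTop := by
  set β := (K + 1) ^ 2 / α + |Real.log b|
  refine tendsto_atTop_mono (fun n => ?_) ((Real.tendsto_exp_atTop.comp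
    (tendsto_mul_two_pow_sub_mul_cube (Real.log_pos hM) β)).const_mul_atTop hC)
  have hn : (1 : ℝ) ≤ n + 1 := by simp
  have hquad : (K * (n + 1) + 1) ^ 2 * (n + 1) / α ≤ (K + 1) ^ 2 / α * (n + 1) ^ 3 := by
    rw [div_mul_eq_mul_div, div_le_div_iff_of_pos_right hα]
    have : K * (n + 1) + 1 ≤ (K + 1) * (n + 1) := by linarith
    calc _ ≤ ((K + 1) * (n + 1)) ^ 2 * (n + 1) := by gcongr
      _ = _ := by ring
  have hlog : -(|Real.log b| * (n + 1) ^ 3) ≤ n * Real.log b := by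
    have h1 : (n : ℝ) ≤ (n + 1) ^ 3 :=
      (le_add_of_nonneg_right zero_le_one).trans (le_self_pow₀ hn (by norm_num))
    have h2 := mul_le_mul_of_nonneg_left (neg_abs_le (Real.log b)) n.cast_nonneg
    linarith [mul_le_mul_of_nonneg_left h1 (abs_nonneg (Real.log b))]
  rw [← Real.exp_log (pow_pos (zero_lt_one.trans hM) _), ← Real.exp_log (pow_pos hb n),
    Real.log_pow, Real.log_pow]
  calc C * Real.exp (Real.log M * 2 ^ n - β * ((n : ℝ) + 1) ^ 3)
      ≤ C * Real.exp ((2 ^ n : ℕ) * Real.log M + (-(K * (n + 1) + 1) ^ 2 * (n + 1) / α)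
          + n * Real.log b) := by
        gcongr
        push_cast
        rw [neg_mul, neg_div]
        nlinarith
    _ = _ := by rw [Real.exp_add, Real.exp_add]; ring

theorem stmt_18_general {Ω : Type*} [MeasurableSpace Ω] (P : MeasureTheory.Measure Ω)
    (T : ℝ) (hT : 0 < T)
    (η lam σ : ℝ) (hη : 0 < η) (hlam : 0 < lam) (hσ : 0 < σ) (x₀ : ℝ) (hx₀ : 0 < x₀)
    (W : ℝ → Ω → ℝ) (hW : IsStandardBrownianMotion P T W)
    (Y : ℕ → ℕ → Ω → ℝ)
    (hY0 : ∀ N, 1 ≤ N → ∀ ω, Y N 0 ω = x₀)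
    (hYrec : ∀ N, 1 ≤ N → ∀ k < N, ∀ ω,
      Y N (k + 1) ω = Y N k ω + (T / N) * ((η + σ ^ 2 / 2) * Y N k ω - lam * (Y N k ω) ^ 2)
        + σ * Y N k ω * (W (((k : ℝ) + 1) * T / N) ω - W ((k : ℝ) * T / N) ω)) :
    ∀ p : ℝ, 1 ≤ p →
      Tendsto (fun N : ℕ => ∫⁻ ω, ENNReal.ofReal (|Y N N ω| ^ p) ∂(P : MeasureTheory.Measure Ω)) atTop (nhds ⊤) := by
  intro p hp
  have hM : 1 < 1 + T * (η + σ ^ 2 / 2) + σ := by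
    have := mul_pos hT (by positivity : 0 < η + σ ^ 2 / 2)
    linarith
  set M := 1 + T * (η + σ ^ 2 / 2) + σ
  -- the first of `n + 1` increments is required to be `≥ K (n + 1)`; this `K` makes that first
  -- step land in the regime where `(T λ / 2(n + 1)) |Y|` squares at each later step
  obtain ⟨K, hK, hK₁, hK₂⟩ : ∃ K, 0 ≤ K ∧ 2 * T * lam * x₀ ≤ σ * K ∧
      4 * M ≤ T * lam * σ * x₀ * K :=
    ⟨max (2 * T * lam * x₀ / σ) (4 * M / (T * lam * σ * x₀)), by positivity,
      (div_le_iff₀' hσ).mp (le_max_left _ _), (div_le_iff₀' (by positivity)).mp (le_max_right _ _)⟩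
  rw [← tendsto_add_atTop_iff_nat 1]
  refine tendsto_nhds_top_mono (ENNReal.tendsto_ofReal_atTop.comp
    (tendsto_pow_two_pow_mul_exp_neg_cubic_mul_pow hM (C := (√(2 * Real.pi * T))⁻¹)
      (b := Real.exp (-2⁻¹) / √(2 * Real.pi)) (α := 2 * T) (by positivity) (by positivity) hK
      (by positivity))) ?_
  filter_upwards [tendsto_natCast_atTop_atTop.eventually_ge_atTop (max T (T * lam / 2))] with n hn
  obtain ⟨hTn, hTlam⟩ := max_le_iff.mp hn
  exact ofReal_le_lintegral_rpow_abs_euler hW hT (by positivity) hlam.le hσ.le hx₀.le le_rfl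
    hK₁ hK₂ (by linarith) (by linarith) (hY0 _ (by omega)) (hYrec _ (by omega)) hp

theorem stmt_18 {Ω : Type*} [MeasurableSpace Ω] (P : MeasureTheory.Measure Ω)
    [MeasureTheory.IsProbabilityMeasure P]
    (T : ℝ) (hT : 0 < T)
    (η lam σ : ℝ) (hη : 0 < η) (hlam : 0 < lam) (hσ : 0 < σ) (x₀ : ℝ) (hx₀ : 0 < x₀)
    (W : ℝ → Ω → ℝ) (hW : IsStandardBrownianMotion P T W)
    (Y : ℕ → ℕ → Ω → ℝ)
    (hY0 : ∀ N, 1 ≤ N → ∀ ω, Y N 0 ω = x₀)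
    (hYrec : ∀ N, 1 ≤ N → ∀ k < N, ∀ ω,
      Y N (k + 1) ω = Y N k ω + (T / N) * ((η + σ ^ 2 / 2) * Y N k ω - lam * (Y N k ω) ^ 2)
        + σ * Y N k ω * (W (((k : ℝ) + 1) * T / N) ω - W ((k : ℝ) * T / N) ω)) :
    ∀ p : ℝ, 1 ≤ p →
      Tendsto (fun N : ℕ => ∫⁻ ω, ENNReal.ofReal (|Y N N ω| ^ p) ∂(P : MeasureTheory.Measure Ω)) atTop (nhds ⊤) :=
  stmt_18_general P T hT η lam σ hη hlam hσ x₀ hx₀ W hW Y hY0 hYrec
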